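/- Let α, β ∈ ℝ with (α,β) ≠ (0,0), let p(t,x,y) := (4πt)^{−1/2}·exp(−(x−y)²/(4t)) be the heat kernel of the real line, fix y < 0, and define E(t,x) := p(t,x,y) + ((β² − α²)/(α² + β²))·p(t,−x,y) for x < 0 and E(t,x) := (2αβ/(α² + β²))·p(t,x,y) for x > 0. Then: (i) for every t > 0 and every x ≠ 0, the heat equation ∂_t E(t,x) = ∂²_x E(t,x) holds; (ii) for every t > 0 the one-sided limits E(t,0⁻), E(t,0⁺), ∂_xE(t,0⁻), ∂_xE(t,0⁺) exist and satisfy the ν-transmission conditions α·E(t,0⁻) = β·E(t,0⁺) and β·∂_xE(t,0⁻) = α·∂_xE(t,0⁺). (Thus the ν-transmission heat kernel is obtained from the free heat kernel by the reflection formulas of the paper.) -/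

import Mathlib

/-!
Both branches of `E` are combinations `a p(t,x,y) + b p(t,-x,y)` of the heat kernel and its
mirror image, and each of them solves the heat equation on the whole line because `p` does.
The one-sided values at `0` are therefore `(a + b) p(t,0,y)` and `(a - b) ∂ₓp(t,0,y)`, and the
transmission conditions reduce to the coefficient identities
`α (1 + c) = β k` and `β (1 - c) = α k` for `c = (β² - α²)/(α² + β²)`, `k = 2αβ/(α² + β²)`.
-/

/-- The heat kernel `p(t,x,y) = (4πt)^{-1/2} exp(-(x-y)²/(4t))` of the real
line. -/
noncomputable def heatKer (t x y : ℝ) : ℝ :=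
  (4 * Real.pi * t) ^ (-(1 : ℝ) / 2) * Real.exp (-(x - y) ^ 2 / (4 * t))

open Filter Set Topology

noncomputable section

def heatKerDeriv (t x y : ℝ) : ℝ := heatKer t x y * (-(x - y) / (2 * t))

def heatKerDeriv2 (t x y : ℝ) : ℝ :=
  heatKer t x y * ((x - y) ^ 2 / (4 * t ^ 2) - 1 / (2 * t))

theorem hasDerivAt_heatKer (t x y : ℝ) :
    HasDerivAt (heatKer t · y) (heatKerDeriv t x y) x := by
  have hexp : HasDerivAt (fun x : ℝ => -(x - y) ^ 2 / (4 * t))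
      (-(2 * (x - y) ^ 1 * 1) / (4 * t)) x :=
    (((hasDerivAt_id x).sub_const y).pow 2).neg.div_const (4 * t)
  refine (hexp.exp.const_mul ((4 * Real.pi * t) ^ (-(1 : ℝ) / 2))).congr_deriv ?_
  unfold heatKerDeriv heatKer
  ring

theorem hasDerivAt_heatKerDeriv (t x y : ℝ) :
    HasDerivAt (heatKerDeriv t · y) (heatKerDeriv2 t x y) x := by
  have hfactor : HasDerivAt (fun x : ℝ => -(x - y) / (2 * t)) (-1 / (2 * t)) x :=
    ((hasDerivAt_id x).sub_const y).neg.div_const (2 * t)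
  refine ((hasDerivAt_heatKer t x y).mul hfactor).congr_deriv ?_
  unfold heatKerDeriv2 heatKerDeriv
  ring

theorem hasDerivAt_heatKer_time {t : ℝ} (ht : 0 < t) (x y : ℝ) :
    HasDerivAt (heatKer · x y) (heatKerDeriv2 t x y) t := by
  have hpos : 0 < 4 * Real.pi * t := by positivity
  have hprefactor : HasDerivAt (fun s : ℝ => (4 * Real.pi * s) ^ (-(1 : ℝ) / 2))
      (4 * Real.pi * (-(1 : ℝ) / 2) * (4 * Real.pi * t) ^ (-(1 : ℝ) / 2 - 1)) t := by
    have h := ((hasDerivAt_id t).const_mul (4 * Real.pi)).rpow_const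
      (p := -(1 : ℝ) / 2) (Or.inl (by simpa using hpos.ne'))
    simpa [mul_comm, mul_left_comm, mul_assoc] using h
  have hexponent : HasDerivAt (fun s : ℝ => -(x - y) ^ 2 / (4 * s))
      ((x - y) ^ 2 / (4 * t ^ 2)) t := by
    have h := (hasDerivAt_inv ht.ne').const_mul (-(x - y) ^ 2 / 4)
    refine (h.congr_deriv ?_).congr_of_eventuallyEq (Eventually.of_forall fun s => ?_)
    · field_simp
    · ring
  have hsplit : (4 * Real.pi * t) ^ (-(1 : ℝ) / 2 - 1)
      = (4 * Real.pi * t) ^ (-(1 : ℝ) / 2) * (4 * Real.pi * t)⁻¹ := by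
    rw [show (-(1 : ℝ) / 2 - 1) = -(1 : ℝ) / 2 + -1 by ring,
      Real.rpow_add hpos, Real.rpow_neg_one]
  refine (hprefactor.mul hexponent.exp).congr_deriv ?_
  unfold heatKerDeriv2 heatKer
  rw [hsplit]
  field_simp
  ring

def heatKerImage (a b y t x : ℝ) : ℝ := a * heatKer t x y + b * heatKer t (-x) y

def heatKerImageDeriv (a b y t x : ℝ) : ℝ := a * heatKerDeriv t x y - b * heatKerDeriv t (-x) y

def heatKerImageDeriv2 (a b y t x : ℝ) : ℝ :=
  a * heatKerDeriv2 t x y + b * heatKerDeriv2 t (-x) y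

section heatKerImage

variable (a b y : ℝ)

theorem hasDerivAt_heatKerImage (t x : ℝ) :
    HasDerivAt (heatKerImage a b y t) (heatKerImageDeriv a b y t x) x := by
  have hmirror := (hasDerivAt_heatKer t (-x) y).comp x (hasDerivAt_neg x)
  refine (((hasDerivAt_heatKer t x y).const_mul a).add (hmirror.const_mul b)).congr_deriv ?_
  simp only [heatKerImageDeriv]
  ring

theorem deriv_heatKerImage (t : ℝ) :
    deriv (heatKerImage a b y t) = heatKerImageDeriv a b y t :=
  funext fun x => (hasDerivAt_heatKerImage a b y t x).deriv

theorem hasDerivAt_heatKerImageDeriv (t x : ℝ) :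
    HasDerivAt (heatKerImageDeriv a b y t) (heatKerImageDeriv2 a b y t x) x := by
  have hmirror := (hasDerivAt_heatKerDeriv t (-x) y).comp x (hasDerivAt_neg x)
  refine (((hasDerivAt_heatKerDeriv t x y).const_mul a).sub
    (hmirror.const_mul b)).congr_deriv ?_
  simp only [heatKerImageDeriv2]
  ring

theorem hasDerivAt_heatKerImage_time {t : ℝ} (ht : 0 < t) (x : ℝ) :
    HasDerivAt (heatKerImage a b y · x) (heatKerImageDeriv2 a b y t x) t :=
  ((hasDerivAt_heatKer_time ht x y).const_mul a).add
    ((hasDerivAt_heatKer_time ht (-x) y).const_mul b)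

theorem heatKerImage_zero (t : ℝ) : heatKerImage a b y t 0 = (a + b) * heatKer t 0 y := by
  simp only [heatKerImage, neg_zero]
  ring

theorem heatKerImageDeriv_zero (t : ℝ) :
    heatKerImageDeriv a b y t 0 = (a - b) * heatKerDeriv t 0 y := by
  simp only [heatKerImageDeriv, neg_zero]
  ring

variable {a b y} {E : ℝ → ℝ → ℝ} {U : Set ℝ}

theorem heat_equation_of_eqOn_heatKerImage (hU : IsOpen U)
    (hE : ∀ s > 0, EqOn (E s) (heatKerImage a b y s) U) {t x : ℝ} (ht : 0 < t) (hx : x ∈ U) :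
    HasDerivAt (deriv (E t)) (heatKerImageDeriv2 a b y t x) x ∧
      HasDerivAt (E · x) (heatKerImageDeriv2 a b y t x) t := by
  have hspace : deriv (E t) =ᶠ[𝓝 x] heatKerImageDeriv a b y t := by
    filter_upwards [hU.mem_nhds hx] with z hz
    rw [((hE t ht).deriv hU) hz, deriv_heatKerImage]
  have htime : (E · x) =ᶠ[𝓝 t] (heatKerImage a b y · x) := by
    filter_upwards [Ioi_mem_nhds ht] with s hs
    exact hE s hs hx
  exact ⟨(hasDerivAt_heatKerImageDeriv a b y t x).congr_of_eventuallyEq hspace,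
    (hasDerivAt_heatKerImage_time a b y ht x).congr_of_eventuallyEq htime⟩

theorem tendsto_of_eqOn_heatKerImage (hU : IsOpen U) {t : ℝ}
    (hE : EqOn (E t) (heatKerImage a b y t) U) (x : ℝ) :
    Tendsto (E t) (𝓝[U] x) (𝓝 (heatKerImage a b y t x)) ∧
      Tendsto (deriv (E t)) (𝓝[U] x) (𝓝 (heatKerImageDeriv a b y t x)) := by
  have hderiv : EqOn (deriv (E t)) (heatKerImageDeriv a b y t) U := by
    simpa only [deriv_heatKerImage] using hE.deriv hU
  exact ⟨((hasDerivAt_heatKerImage a b y t x).continuousAt.tendsto.mono_left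
      nhdsWithin_le_nhds).congr' (eventuallyEq_nhdsWithin_of_eqOn hE).symm,
    ((hasDerivAt_heatKerImageDeriv a b y t x).continuousAt.tendsto.mono_left
      nhdsWithin_le_nhds).congr' (eventuallyEq_nhdsWithin_of_eqOn hderiv).symm⟩

end heatKerImage

theorem transmission_coefficients {α β : ℝ} (hν : (α, β) ≠ (0, 0)) :
    α * (1 + (β ^ 2 - α ^ 2) / (α ^ 2 + β ^ 2)) = β * (2 * α * β / (α ^ 2 + β ^ 2)) ∧
      β * (1 - (β ^ 2 - α ^ 2) / (α ^ 2 + β ^ 2)) = α * (2 * α * β / (α ^ 2 + β ^ 2)) := by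
  have hs : α ^ 2 + β ^ 2 ≠ 0 := by
    contrapose! hν
    obtain ⟨hα, hβ⟩ := (add_eq_zero_iff_of_nonneg (sq_nonneg α) (sq_nonneg β)).1 hν
    rw [pow_eq_zero_iff two_ne_zero] at hα hβ
    rw [hα, hβ]
  constructor <;> field_simp <;> ring

end

theorem heat_kernel_transmission_general (α β : ℝ) (hν : (α, β) ≠ (0, 0))
    (y : ℝ) (E : ℝ → ℝ → ℝ)
    (hEneg : ∀ t > (0 : ℝ), ∀ x < (0 : ℝ),
      E t x = heatKer t x y + ((β ^ 2 - α ^ 2) / (α ^ 2 + β ^ 2)) * heatKer t (-x) y)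
    (hEpos : ∀ t > (0 : ℝ), ∀ x > (0 : ℝ),
      E t x = (2 * α * β / (α ^ 2 + β ^ 2)) * heatKer t x y) :
    (∀ t > (0 : ℝ), ∀ x : ℝ, x ≠ 0 → ∃ D : ℝ,
      HasDerivAt (deriv (fun z => E t z)) D x ∧
      HasDerivAt (fun s => E s x) D t) ∧
    ∀ t > (0 : ℝ), ∃ L₁ L₂ M₁ M₂ : ℝ,
      Filter.Tendsto (E t) (nhdsWithin 0 (Set.Iio 0)) (nhds L₁) ∧
      Filter.Tendsto (E t) (nhdsWithin 0 (Set.Ioi 0)) (nhds L₂) ∧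
      Filter.Tendsto (deriv (E t)) (nhdsWithin 0 (Set.Iio 0)) (nhds M₁) ∧
      Filter.Tendsto (deriv (E t)) (nhdsWithin 0 (Set.Ioi 0)) (nhds M₂) ∧
      α * L₁ = β * L₂ ∧ β * M₁ = α * M₂ := by
  obtain ⟨hvalue, hflux⟩ := transmission_coefficients hν
  set c := (β ^ 2 - α ^ 2) / (α ^ 2 + β ^ 2)
  set k := 2 * α * β / (α ^ 2 + β ^ 2)
  have hneg : ∀ s > 0, EqOn (E s) (heatKerImage 1 c y s) (Iio 0) := fun s hs x hx => by
    simp [heatKerImage, hEneg s hs x hx]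
  have hpos : ∀ s > 0, EqOn (E s) (heatKerImage k 0 y s) (Ioi 0) := fun s hs x hx => by
    simp [heatKerImage, hEpos s hs x hx]
  refine ⟨fun t ht x hx => ?_, fun t ht => ?_⟩
  · rcases hx.lt_or_gt with hx | hx
    · exact ⟨_, heat_equation_of_eqOn_heatKerImage isOpen_Iio hneg ht hx⟩
    · exact ⟨_, heat_equation_of_eqOn_heatKerImage isOpen_Ioi hpos ht hx⟩
  obtain ⟨hL₁, hM₁⟩ := tendsto_of_eqOn_heatKerImage isOpen_Iio (hneg t ht) 0
  obtain ⟨hL₂, hM₂⟩ := tendsto_of_eqOn_heatKerImage isOpen_Ioi (hpos t ht) 0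
  refine ⟨_, _, _, _, hL₁, hL₂, hM₁, hM₂, ?_, ?_⟩
  · simp only [heatKerImage_zero, add_zero, ← mul_assoc, hvalue]
  · simp only [heatKerImageDeriv_zero, sub_zero, ← mul_assoc, hflux]

/-- The `ν`-transmission heat kernel on the line, obtained from the free heat
kernel by the reflection formulas: with `y < 0` fixed and
`E(t,x) = p(t,x,y) + ((β²-α²)/(α²+β²)) p(t,-x,y)` for `x < 0`,
`E(t,x) = (2αβ/(α²+β²)) p(t,x,y)` for `x > 0`, the function `E` satisfies the
heat equation `∂_t E = ∂²_x E` off `x = 0` and the `ν`-transmission conditions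
`α·E(t,0⁻) = β·E(t,0⁺)`, `β·∂_xE(t,0⁻) = α·∂_xE(t,0⁺)` at `x = 0`. -/
theorem heat_kernel_transmission (α β : ℝ) (hν : (α, β) ≠ (0, 0))
    (y : ℝ) (hy : y < 0) (E : ℝ → ℝ → ℝ)
    (hEneg : ∀ t > (0 : ℝ), ∀ x < (0 : ℝ),
      E t x = heatKer t x y + ((β ^ 2 - α ^ 2) / (α ^ 2 + β ^ 2)) * heatKer t (-x) y)
    (hEpos : ∀ t > (0 : ℝ), ∀ x > (0 : ℝ),
      E t x = (2 * α * β / (α ^ 2 + β ^ 2)) * heatKer t x y) :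
    (∀ t > (0 : ℝ), ∀ x : ℝ, x ≠ 0 → ∃ D : ℝ,
      HasDerivAt (deriv (fun z => E t z)) D x ∧
      HasDerivAt (fun s => E s x) D t) ∧
    ∀ t > (0 : ℝ), ∃ L₁ L₂ M₁ M₂ : ℝ,
      Filter.Tendsto (E t) (nhdsWithin 0 (Set.Iio 0)) (nhds L₁) ∧
      Filter.Tendsto (E t) (nhdsWithin 0 (Set.Ioi 0)) (nhds L₂) ∧
      Filter.Tendsto (deriv (E t)) (nhdsWithin 0 (Set.Iio 0)) (nhds M₁) ∧
      Filter.Tendsto (deriv (E t)) (nhdsWithin 0 (Set.Ioi 0)) (nhds M₂) ∧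
      α * L₁ = β * L₂ ∧ β * M₁ = α * M₂ :=
  heat_kernel_transmission_general α β hν y E hEneg hEpos
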